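/- arXiv:2010.00030 — 5 statements merged into one kernel-verified Lean document; each statement's English description precedes it below -/
import Mathlib

section
/- Let φ be a CaTL formula in which every task has duration d ≥ 1 and every task's proposition π satisfies L⁻¹(π) ≠ ∅ (some state carries the label). Let s_J be the team trajectory of the full team J, and let α be an assignment such that for every leaf λ carrying a task with proposition π_λ, α(λ) contains every agent j ∈ J for which there exist τ ∈ ℕ and q ∈ Q with s_j τ = some q and π_λ ∈ L(q). Then for every time t ∈ ℕ and every capability c ∈ Cap, ρ(s_J, t, φ) ≤ ce(α, v_0)(c) (as extended reals), where v_0 is the root of the syntax tree of φ; in particular ρ(s_J, t, φ) ≤ min over c ∈ Cap of ce(α, v_0)(c). -/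
open scoped Classical

/-- A CaTL task `T = (d, π, cp_T, cp)`: a duration, an atomic proposition, a nonempty
finite set of required capabilities, and a counting map. -/
structure CTask (AP Cap : Type) where
  dur : ℕ
  prop : AP
  cpT : Finset Cap
  cpT_nonempty : cpT.Nonempty
  cp : Cap → ℤ

/-- CaTL formulas: `φ ::= T | φ₁ ∧ φ₂ | φ₁ ∨ φ₂ | φ₁ U_[a,b] φ₂ | F_[a,b] φ | G_[a,b] φ`
with `a ≤ b`. -/
inductive CaTL (AP Cap : Type) : Type where
  | task (T : CTask AP Cap)
  | and (φ₁ φ₂ : CaTL AP Cap)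
  | or (φ₁ φ₂ : CaTL AP Cap)
  | untl (a b : ℕ) (hab : a ≤ b) (φ₁ φ₂ : CaTL AP Cap)
  | ev (a b : ℕ) (hab : a ≤ b) (φ : CaTL AP Cap)
  | alw (a b : ℕ) (hab : a ≤ b) (φ : CaTL AP Cap)

/-- CaTL syntax trees with an assignment of agents baked into the leaves:
each leaf (task occurrence) `λ` carries the set `A = α(λ) ⊆ J` of agents assigned to it. -/
inductive ATree (AP Cap J : Type) : Type where
  | leaf (T : CTask AP Cap) (A : Finset J)
  | and (l r : ATree AP Cap J)
  | or (l r : ATree AP Cap J)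
  | untl (a b : ℕ) (hab : a ≤ b) (l r : ATree AP Cap J)
  | ev (a b : ℕ) (hab : a ≤ b) (c : ATree AP Cap J)
  | alw (a b : ℕ) (hab : a ≤ b) (c : ATree AP Cap J)

variable {Q AP Cap J : Type}

/-- `n_{q,c}^{J'}(t)`: the number of agents `j ∈ J'` with `s j t = some q` and `c ∈ Cap_j`. -/
noncomputable def nAgents (caps : J → Finset Cap) (s : J → ℕ → Option Q)
    (J' : Finset J) (q : Q) (c : Cap) (t : ℕ) : ℕ :=
  (J'.filter (fun j => s j t = some q ∧ c ∈ caps j)).card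

/-- Quantitative CaTL semantics (availability robustness) `ρ(s_{J'}, t, φ) ∈ EReal`.
The infimum over an empty index set is `+∞` and the supremum is `-∞`. -/
noncomputable def rob (L : Q → Set AP) (caps : J → Finset Cap) (s : J → ℕ → Option Q)
    (J' : Finset J) : CaTL AP Cap → ℕ → EReal
  | .task T, t => ⨅ c ∈ T.cpT, ⨅ τ ∈ Finset.Ico t (t + T.dur), ⨅ q ∈ {q : Q | T.prop ∈ L q},
      ((((nAgents caps s J' q c τ : ℤ) - T.cp c : ℤ) : ℝ) : EReal)
  | .and φ₁ φ₂, t => min (rob L caps s J' φ₁ t) (rob L caps s J' φ₂ t)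
  | .or φ₁ φ₂, t => max (rob L caps s J' φ₁ t) (rob L caps s J' φ₂ t)
  | .untl a b _ φ₁ φ₂, t => ⨆ t' ∈ Finset.Icc (t + a) (t + b),
      min (rob L caps s J' φ₂ t') (⨅ τ ∈ Finset.Icc t t', rob L caps s J' φ₁ τ)
  | .ev a b _ φ, t => ⨆ τ ∈ Finset.Icc (t + a) (t + b), rob L caps s J' φ τ
  | .alw a b _ φ, t => ⨅ τ ∈ Finset.Icc (t + a) (t + b), rob L caps s J' φ τ

/-- The CaTL formula whose syntax tree is the given tree (forgetting the assignment). -/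
def ATree.formula : ATree AP Cap J → CaTL AP Cap
  | .leaf T _ => .task T
  | .and l r => .and l.formula r.formula
  | .or l r => .or l.formula r.formula
  | .untl a b h l r => .untl a b h l.formula r.formula
  | .ev a b h c => .ev a b h c.formula
  | .alw a b h c => .alw a b h c.formula

/-- Capability excess `ce(α, v) : Cap → ℤ ∪ {+∞}` (embedded in `EReal`):
at a leaf it is the number of assigned agents with capability `c` minus `cp(c)` for
required capabilities and `+∞` otherwise; at a disjunction it is the componentwise max
of the children; at every other internal node it is the componentwise min. -/
noncomputable def ATree.ce (caps : J → Finset Cap) : ATree AP Cap J → Cap → EReal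
  | .leaf T A, c =>
      if c ∈ T.cpT then (((((A.filter (fun j => c ∈ caps j)).card : ℤ) - T.cp c : ℤ) : ℝ) : EReal)
      else (⊤ : EReal)
  | .and l r, c => min (l.ce caps c) (r.ce caps c)
  | .or l r, c => max (l.ce caps c) (r.ce caps c)
  | .untl _ _ _ l r, c => min (l.ce caps c) (r.ce caps c)
  | .ev _ _ _ t, c => t.ce caps c
  | .alw _ _ _ t, c => t.ce caps c

/-- An assignment is eligible for a syntax tree if the capability excess at the root
is nonnegative for every capability. -/
def ATree.elig (caps : J → Finset Cap) (T : ATree AP Cap J) : Prop :=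
  ∀ c : Cap, 0 ≤ T.ce caps c

/-- Hypotheses on the leaves: every task has duration `d ≥ 1`, its proposition labels
some state, and the assignment of every leaf contains every agent that ever occupies a
state labeled by the leaf's proposition. -/
def ATree.goodLeaves (L : Q → Set AP) (s : J → ℕ → Option Q) : ATree AP Cap J → Prop
  | .leaf T A => 1 ≤ T.dur ∧ (∃ q, T.prop ∈ L q) ∧
      ∀ j : J, (∃ τ q, s j τ = some q ∧ T.prop ∈ L q) → j ∈ A
  | .and l r => l.goodLeaves L s ∧ r.goodLeaves L s
  | .or l r => l.goodLeaves L s ∧ r.goodLeaves L s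
  | .untl _ _ _ l r => l.goodLeaves L s ∧ r.goodLeaves L s
  | .ev _ _ _ c => c.goodLeaves L s
  | .alw _ _ _ c => c.goodLeaves L s

/-! Every temporal operator's robustness is bounded by the value of a subformula at a
single time, whereas the capability excess ignores time; so it suffices to bound a task's
robustness at an arbitrary time. For a required capability `c`, evaluate at the first instant
of the window (it exists since `d ≥ 1`) and at a state carrying the task's label: every agent
present there with capability `c` is assigned to the leaf, so the count is at most the number
of assigned agents with capability `c`. -/

section

variable {L : Q → Set AP} {caps : J → Finset Cap} {s : J → ℕ → Option Q} {J' : Finset J}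

theorem nAgents_le_card_filter {A : Finset J} {q : Q} {c : Cap} {t : ℕ}
    (hA : ∀ j ∈ J', s j t = some q → j ∈ A) :
    nAgents caps s J' q c t ≤ (A.filter (fun j => c ∈ caps j)).card :=
  Finset.card_le_card fun j hj => by
    simp only [Finset.mem_filter] at hj ⊢
    exact ⟨hA j hj.1 hj.2.1, hj.2.2⟩

theorem rob_task_le {T : CTask AP Cap} {A : Finset J} {q : Q} {c : Cap} {t : ℕ}
    (hd : 1 ≤ T.dur) (hq : T.prop ∈ L q) (hc : c ∈ T.cpT)
    (hA : ∀ j ∈ J', s j t = some q → j ∈ A) :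
    rob L caps s J' (.task T) t ≤
      (((((A.filter (fun j => c ∈ caps j)).card : ℤ) - T.cp c : ℤ) : ℝ) : EReal) :=
  calc rob L caps s J' (.task T) t
      ≤ ((((nAgents caps s J' q c t : ℤ) - T.cp c : ℤ) : ℝ) : EReal) :=
        iInf₂_le_of_le c hc <| iInf₂_le_of_le t (by simp; omega) <| iInf₂_le q hq
    _ ≤ _ := by
        gcongr
        exact nAgents_le_card_filter hA

theorem rob_untl_le {a b : ℕ} (hab : a ≤ b) {φ₁ φ₂ : CaTL AP Cap} {x y : EReal}
    (h₁ : ∀ t, rob L caps s J' φ₁ t ≤ x) (h₂ : ∀ t, rob L caps s J' φ₂ t ≤ y) (t : ℕ) :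
    rob L caps s J' (.untl a b hab φ₁ φ₂) t ≤ min x y :=
  iSup₂_le fun t' ht' => by
    have ht : t ∈ Finset.Icc t t' := by simp only [Finset.mem_Icc] at ht' ⊢; omega
    exact le_min ((min_le_right _ _).trans (iInf₂_le_of_le t ht (h₁ t)))
      ((min_le_left _ _).trans (h₂ t'))

theorem rob_ev_le {a b : ℕ} (hab : a ≤ b) {φ : CaTL AP Cap} {x : EReal}
    (h : ∀ t, rob L caps s J' φ t ≤ x) (t : ℕ) :
    rob L caps s J' (.ev a b hab φ) t ≤ x :=
  iSup₂_le fun τ _ => h τ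

theorem rob_alw_le {a b : ℕ} (hab : a ≤ b) {φ : CaTL AP Cap} {x : EReal}
    (h : ∀ t, rob L caps s J' φ t ≤ x) (t : ℕ) :
    rob L caps s J' (.alw a b hab φ) t ≤ x :=
  iInf₂_le_of_le (t + a) (by simp [hab]) (h (t + a))

theorem ATree.rob_formula_le_ce (T : ATree AP Cap J) (hT : T.goodLeaves L s) (c : Cap) (t : ℕ) :
    rob L caps s J' T.formula t ≤ T.ce caps c := by
  induction T generalizing t with
  | leaf T A =>
    obtain ⟨hd, ⟨q, hq⟩, hA⟩ := hT
    by_cases hc : c ∈ T.cpT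
    · rw [ATree.ce, if_pos hc]
      exact rob_task_le hd hq hc fun j _ hj => hA j ⟨t, q, hj, hq⟩
    · rw [ATree.ce, if_neg hc]
      exact le_top
  | and l r ihl ihr => exact min_le_min (ihl hT.1 t) (ihr hT.2 t)
  | or l r ihl ihr => exact max_le_max (ihl hT.1 t) (ihr hT.2 t)
  | untl a b hab l r ihl ihr => exact rob_untl_le hab (ihl hT.1) (ihr hT.2) t
  | ev a b hab T ih => exact rob_ev_le hab (ih hT) t
  | alw a b hab T ih => exact rob_alw_le hab (ih hT) t

end

theorem robustness_le_capability_excess_general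
    [Fintype J]
    (L : Q → Set AP) (caps : J → Finset Cap) (s : J → ℕ → Option Q)
    (T : ATree AP Cap J) (hT : T.goodLeaves L s) (t : ℕ) :
    (∀ c : Cap, rob L caps s Finset.univ T.formula t ≤ T.ce caps c) ∧
      rob L caps s Finset.univ T.formula t ≤ ⨅ c : Cap, T.ce caps c :=
  have h (c : Cap) := T.rob_formula_le_ce hT c t
  ⟨h, le_iInf h⟩

/-- for the full team `J` and an assignment whose leaves contain every
agent that could possibly service them, the robustness of `φ` at any time `t` is at
most the capability excess of the root for every capability `c` (and consequently at
most the minimum of the capability excess over all capabilities). -/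
theorem robustness_le_capability_excess
    [Fintype Q] [Fintype Cap] [Fintype J] [DecidableEq J]
    (L : Q → Set AP) (caps : J → Finset Cap) (s : J → ℕ → Option Q)
    (T : ATree AP Cap J) (hT : T.goodLeaves L s) (t : ℕ) :
    (∀ c : Cap, rob L caps s Finset.univ T.formula t ≤ T.ce caps c) ∧
      rob L caps s Finset.univ T.formula t ≤ ⨅ c : Cap, T.ce caps c :=
  robustness_le_capability_excess_general L caps s T hT t
end

section
/- (Base case: capability excess bounds task robustness.) Let T = (d, π, cp_T, cp) be a task with duration d ≥ 1 and with L⁻¹(π) ≠ ∅, let s_J be the team trajectory of the full team J, and let J' ⊆ J be any set of agents containing every agent j ∈ J for which there exist τ ∈ ℕ and q ∈ Q with s_j τ = some q and π ∈ L(q). Then for every time t ∈ ℕ, ρ(s_J, t, T) ≤ min over c ∈ cp_T of (|{j ∈ J' : c ∈ Cap_j}| − cp(c)). -/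
open scoped Classical

variable {Q AP Cap J : Type}

lemma rob_task_le_of_mem {L : Q → Set AP} {caps : J → Finset Cap} {s : J → ℕ → Option Q}
    {J' : Finset J} {T : CTask AP Cap} {t τ : ℕ} {c : Cap} {q : Q} (hc : c ∈ T.cpT)
    (hτ : τ ∈ Finset.Ico t (t + T.dur)) (hq : T.prop ∈ L q) :
    rob L caps s J' (.task T) t ≤ ((((nAgents caps s J' q c τ : ℤ) - T.cp c : ℤ) : ℝ) : EReal) :=
  (iInf₂_le c hc).trans <| (iInf₂_le τ hτ).trans <| iInf₂_le q hq

lemma nAgents_le_card_filter_mem_caps {caps : J → Finset Cap} {s : J → ℕ → Option Q}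
    {J' J'' : Finset J} {q : Q} {τ : ℕ} (c : Cap) (h : ∀ j ∈ J', s j τ = some q → j ∈ J'') :
    nAgents caps s J' q c τ ≤ (J''.filter (fun j => c ∈ caps j)).card := by
  refine Finset.card_le_card fun j hj => ?_
  rw [Finset.mem_filter] at hj ⊢
  exact ⟨h j hj.1 hj.2.1, hj.2.2⟩

theorem task_robustness_le_capability_excess_general
    [Fintype J]
    (L : Q → Set AP) (caps : J → Finset Cap) (s : J → ℕ → Option Q)
    (T : CTask AP Cap) (hd : 1 ≤ T.dur) (hq : ∃ q, T.prop ∈ L q)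
    (J' : Finset J)
    (hJ' : ∀ j : J, (∃ τ q, s j τ = some q ∧ T.prop ∈ L q) → j ∈ J')
    (t : ℕ) :
    rob L caps s Finset.univ (.task T) t ≤
      ⨅ c ∈ T.cpT, (((((J'.filter (fun j => c ∈ caps j)).card : ℤ) - T.cp c : ℤ) : ℝ) : EReal) := by
  obtain ⟨q, hq⟩ := hq
  refine le_iInf₂ fun c hc => ?_
  have ht : t ∈ Finset.Ico t (t + T.dur) := Finset.mem_Ico.mpr ⟨le_rfl, by omega⟩
  have hcount : nAgents caps s Finset.univ q c t ≤ (J'.filter (fun j => c ∈ caps j)).card :=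
    nAgents_le_card_filter_mem_caps c fun j _ hj => hJ' j ⟨t, q, hj, hq⟩
  calc rob L caps s Finset.univ (.task T) t
      ≤ ((((nAgents caps s Finset.univ q c t : ℤ) - T.cp c : ℤ) : ℝ) : EReal) :=
        rob_task_le_of_mem hc ht hq
    _ ≤ _ := by gcongr

/-- base case: if the task has duration `d ≥ 1` and some state carries
`π`, and `J'` contains every agent that ever occupies a `π`-labeled state, then the
robustness of the task for the full team is at most
`min_{c ∈ cp_T} (|{j ∈ J' : c ∈ Cap_j}| − cp(c))`. -/
theorem task_robustness_le_capability_excess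
    [Fintype Q] [Fintype Cap] [Fintype J] [DecidableEq J]
    (L : Q → Set AP) (caps : J → Finset Cap) (s : J → ℕ → Option Q)
    (T : CTask AP Cap) (hd : 1 ≤ T.dur) (hq : ∃ q, T.prop ∈ L q)
    (J' : Finset J)
    (hJ' : ∀ j : J, (∃ τ q, s j τ = some q ∧ T.prop ∈ L q) → j ∈ J')
    (t : ℕ) :
    rob L caps s Finset.univ (.task T) t ≤
      ⨅ c ∈ T.cpT, (((((J'.filter (fun j => c ∈ caps j)).card : ℤ) - T.cp c : ℤ) : ℝ) : EReal) :=
  task_robustness_le_capability_excess_general L caps s T hd hq J' hJ' t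
end

section
/- (Pruning at disjunction preserves eligibility of the original tree.) Let T_φ be the syntax tree of a CaTL formula φ, let v be a disjunction node of T_φ, and let v' be a child of v. Let T' be the tree obtained from T_φ by replacing the subtree rooted at v with the subtree rooted at v', and for an assignment α on T_φ let α' be the induced assignment on T' (α' agrees with α on every leaf of T'). If α' is eligible for T', then α is eligible for T_φ. -/
open scoped Classical

variable {Q AP Cap J : Type}

/-- One-hole contexts for CaTL syntax trees: a syntax tree with one designated
subtree position (node) left open. -/
inductive Ctx (AP Cap J : Type) : Type where
  | hole
  | andL (C : Ctx AP Cap J) (r : ATree AP Cap J)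
  | andR (l : ATree AP Cap J) (C : Ctx AP Cap J)
  | orL (C : Ctx AP Cap J) (r : ATree AP Cap J)
  | orR (l : ATree AP Cap J) (C : Ctx AP Cap J)
  | untlL (a b : ℕ) (hab : a ≤ b) (C : Ctx AP Cap J) (r : ATree AP Cap J)
  | untlR (a b : ℕ) (hab : a ≤ b) (l : ATree AP Cap J) (C : Ctx AP Cap J)
  | ev (a b : ℕ) (hab : a ≤ b) (C : Ctx AP Cap J)
  | alw (a b : ℕ) (hab : a ≤ b) (C : Ctx AP Cap J)

/-- Filling the hole of a context with a tree: the result is the full syntax tree in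
which the given tree is the subtree rooted at the designated node; all other leaves
(and hence the assignment on them) are unchanged. -/
def Ctx.fill : Ctx AP Cap J → ATree AP Cap J → ATree AP Cap J
  | .hole, t => t
  | .andL C r, t => .and (C.fill t) r
  | .andR l C, t => .and l (C.fill t)
  | .orL C r, t => .or (C.fill t) r
  | .orR l C, t => .or l (C.fill t)
  | .untlL a b h C r, t => .untl a b h (C.fill t) r
  | .untlR a b h l C, t => .untl a b h l (C.fill t)
  | .ev a b h C, t => .ev a b h (C.fill t)
  | .alw a b h C, t => .alw a b h (C.fill t)

theorem Ctx.ce_fill_mono (caps : J → Finset Cap) (C : Ctx AP Cap J) {t t' : ATree AP Cap J}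
    (h : t.ce caps ≤ t'.ce caps) : (C.fill t).ce caps ≤ (C.fill t').ce caps := by
  induction C with
  | hole => exact h
  | andL _ _ ih | untlL _ _ _ _ _ ih => exact fun c => min_le_min (ih c) le_rfl
  | andR _ _ ih | untlR _ _ _ _ _ ih => exact fun c => min_le_min le_rfl (ih c)
  | orL _ _ ih => exact fun c => max_le_max (ih c) le_rfl
  | orR _ _ ih => exact fun c => max_le_max le_rfl (ih c)
  | ev _ _ _ _ ih | alw _ _ _ _ ih => exact ih

theorem ATree.elig.mono {caps : J → Finset Cap} {t t' : ATree AP Cap J} (ht : t.elig caps)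
    (h : t.ce caps ≤ t'.ce caps) : t'.elig caps :=
  fun c => (ht c).trans (h c)

theorem ATree.ce_le_ce_or_left (caps : J → Finset Cap) (t₁ t₂ : ATree AP Cap J) :
    t₁.ce caps ≤ (ATree.or t₁ t₂).ce caps :=
  fun _ => le_max_left _ _

theorem ATree.ce_le_ce_or_right (caps : J → Finset Cap) (t₁ t₂ : ATree AP Cap J) :
    t₂.ce caps ≤ (ATree.or t₁ t₂).ce caps :=
  fun _ => le_max_right _ _

/-- pruning at a disjunction preserves eligibility of the original tree.
If the tree obtained by replacing the subtree rooted at a disjunction node by (the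
subtree rooted at) one of its children is eligible for the induced assignment, then the
original tree is eligible. -/
theorem prune_disjunction_preserves_eligibility
    (caps : J → Finset Cap) (C : Ctx AP Cap J) (τ₁ τ₂ : ATree AP Cap J)
    (h : ATree.elig caps (C.fill τ₁) ∨ ATree.elig caps (C.fill τ₂)) :
    ATree.elig caps (C.fill (.or τ₁ τ₂)) := by
  rcases h with h | h
  · exact h.mono (C.ce_fill_mono caps (ATree.ce_le_ce_or_left caps τ₁ τ₂))
  · exact h.mono (C.ce_fill_mono caps (ATree.ce_le_ce_or_right caps τ₁ τ₂))
end

section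
/- (Quantitative soundness of the until substitution.) Let x, y : ℕ → ℝ and let t, a, b ∈ ℕ with a ≤ b. Then min( min_{τ ∈ [t, t+b]} x(τ), max_{τ ∈ [t+a, t+b]} y(τ) ) ≤ max_{t' ∈ [t+a, t+b]} min( y(t'), min_{τ ∈ [t, t']} x(τ) ), where all minima and maxima are over the indicated finite intervals of natural numbers (which are nonempty since a ≤ b). -/
open Set

theorem csInf_image_Icc_le_csInf_image_Icc_of_le {α β : Type*} [Preorder α]
    [LocallyFiniteOrder α] [ConditionallyCompleteLattice β] (f : α → β) {a b c : α}
    (hab : a ≤ b) (hbc : b ≤ c) :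
    sInf (f '' Icc a c) ≤ sInf (f '' Icc a b) :=
  csInf_le_csInf ((finite_Icc a c).image f).bddBelow ((nonempty_Icc.2 hab).image f)
    (image_mono (Icc_subset_Icc_right hbc))

/-- quantitative soundness of the until substitution.  The robustness of
`G_[0,b] x ∧ F_[a,b] y` at time `t` is at most the robustness of `x U_[a,b] y` at `t`. -/
theorem robustness_globally_eventually_le_until
    (x y : ℕ → ℝ) (t a b : ℕ) (hab : a ≤ b) :
    min (sInf (x '' Set.Icc t (t + b))) (sSup (y '' Set.Icc (t + a) (t + b))) ≤
      sSup ((fun t' => min (y t') (sInf (x '' Set.Icc t t'))) '' Set.Icc (t + a) (t + b)) := by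
  -- The until witness is a time `t₀` at which `y` attains its maximum over `[t + a, t + b]`.
  obtain ⟨t₀, ht₀, hy⟩ : sSup (y '' Icc (t + a) (t + b)) ∈ y '' Icc (t + a) (t + b) :=
    ((nonempty_Icc.2 (by omega)).image y).csSup_mem ((finite_Icc _ _).image y)
  calc min (sInf (x '' Icc t (t + b))) (sSup (y '' Icc (t + a) (t + b)))
      = min (y t₀) (sInf (x '' Icc t (t + b))) := by rw [← hy, min_comm]
    _ ≤ min (y t₀) (sInf (x '' Icc t t₀)) :=
        min_le_min_left _ <| csInf_image_Icc_le_csInf_image_Icc_of_le x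
          ((Nat.le_add_right t a).trans ht₀.1) ht₀.2
    _ ≤ sSup ((fun t' => min (y t') (sInf (x '' Icc t t'))) '' Icc (t + a) (t + b)) :=
        le_csSup ((finite_Icc _ _).image _).bddAbove ⟨t₀, ht₀, rfl⟩
end

section
/- (Robustness of a decomposed solution.) Let {J_r}_{r ∈ R} be a nonempty finite family of subsets of the agent set J (every agent keeps the same trajectory), and let {φ_r}_{r ∈ R} be CaTL formulas. Then for every time t ∈ ℕ, ρ(s_J, t, ⋀_{r ∈ R} φ_r) ≥ min over r ∈ R of ρ(s_{J_r}, t, φ_r); i.e., the worst-case robustness of the subteam solutions lower-bounds the robustness of the full team for the conjoined specification. -/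
open scoped Classical

variable {Q AP Cap J : Type}

/-- The conjunction `⋀` of a nonempty list of CaTL formulas `φ :: φs`. -/
def bigConj : CaTL AP Cap → List (CaTL AP Cap) → CaTL AP Cap
  | φ, [] => φ
  | φ, ψ :: l => .and φ (bigConj ψ l)

/-! Every clause of the robustness semantics is a monotone combination of agent counts,
and counts can only grow with the team, so each subteam's robustness for `φ_r` is at most
the full team's. The robustness of the conjunction is the minimum of the conjuncts'. -/

lemma nAgents_mono (caps : J → Finset Cap) (s : J → ℕ → Option Q)
    {J₁ J₂ : Finset J} (h : J₁ ⊆ J₂) (q : Q) (c : Cap) (t : ℕ) :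
    nAgents caps s J₁ q c t ≤ nAgents caps s J₂ q c t :=
  Finset.card_le_card (Finset.filter_subset_filter _ h)

lemma rob_mono (L : Q → Set AP) (caps : J → Finset Cap) (s : J → ℕ → Option Q)
    {J₁ J₂ : Finset J} (h : J₁ ⊆ J₂) (φ : CaTL AP Cap) (t : ℕ) :
    rob L caps s J₁ φ t ≤ rob L caps s J₂ φ t := by
  induction φ generalizing t with
  | task T =>
    refine iInf₂_mono fun c _ => iInf₂_mono fun τ _ => iInf₂_mono fun q _ => ?_
    have hn : (nAgents caps s J₁ q c τ : ℤ) ≤ nAgents caps s J₂ q c τ :=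
      Int.ofNat_le.mpr (nAgents_mono caps s h q c τ)
    exact_mod_cast Int.sub_le_sub_right hn (T.cp c)
  | and φ₁ φ₂ ih₁ ih₂ => exact min_le_min (ih₁ t) (ih₂ t)
  | or φ₁ φ₂ ih₁ ih₂ => exact max_le_max (ih₁ t) (ih₂ t)
  | untl a b _ φ₁ φ₂ ih₁ ih₂ =>
    exact iSup₂_mono fun t' _ => min_le_min (ih₂ t') (iInf₂_mono fun τ _ => ih₁ τ)
  | ev a b _ φ ih => exact iSup₂_mono fun τ _ => ih τ
  | alw a b _ φ ih => exact iInf₂_mono fun τ _ => ih τ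

theorem decomposed_robustness_lower_bound_general [Fintype J]
    (L : Q → Set AP) (caps : J → Finset Cap) (s : J → ℕ → Option Q)
    (p : Finset J × CaTL AP Cap) (ps : List (Finset J × CaTL AP Cap)) (t : ℕ) :
    ((p :: ps).map (fun r => rob L caps s r.1 r.2 t)).foldr min ⊤ ≤
      rob L caps s Finset.univ (bigConj p.2 (ps.map Prod.snd)) t := by
  have to_univ (r : Finset J × CaTL AP Cap) :
      rob L caps s r.1 r.2 t ≤ rob L caps s Finset.univ r.2 t :=
    rob_mono L caps s (Finset.subset_univ _) r.2 t
  induction ps generalizing p with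
  | nil => simpa [bigConj] using to_univ p
  | cons p' ps ih =>
    simpa only [List.map_cons, List.foldr, bigConj, rob] using
      min_le_min (to_univ p) (by simpa using ih p')

/-- robustness of a decomposed solution.  For a nonempty finite family of
subteam/sub-specification pairs (given as the list `p :: ps`, each `J_r ⊆ J`), the
minimum over the family of the subteam robustness lower-bounds the robustness of the
full team for the conjunction `⋀_r φ_r`, at every time `t`. -/
theorem decomposed_robustness_lower_bound [Fintype Q] [Fintype Cap] [Fintype J]
    (L : Q → Set AP) (caps : J → Finset Cap) (s : J → ℕ → Option Q)
    (p : Finset J × CaTL AP Cap) (ps : List (Finset J × CaTL AP Cap)) (t : ℕ) :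
    ((p :: ps).map (fun r => rob L caps s r.1 r.2 t)).foldr min ⊤ ≤
      rob L caps s Finset.univ (bigConj p.2 (ps.map Prod.snd)) t :=
  decomposed_robustness_lower_bound_general L caps s p ps t
end
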